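/- For all octonionic column vectors U, V, W ∈ 𝕆ⁿ, the vector associator satisfies [U, V, W] + [U, W, V] = 0; consequently, the totally symmetrized sum vanishes: [U,V,W] + [U,W,V] + [V,W,U] + [V,U,W] + [W,U,V] + [W,V,U] = 0. -/

import Mathlib

noncomputable section

open scoped BigOperators Matrix

/-- The octonions `𝕆`, realized as the Cayley–Dickson double of the quaternions. -/
def Oct : Type := Quaternion ℝ × Quaternion ℝ

namespace Oct

instance : AddCommGroup Oct := inferInstanceAs (AddCommGroup (Quaternion ℝ × Quaternion ℝ))
instance : Module ℝ Oct := inferInstanceAs (Module ℝ (Quaternion ℝ × Quaternion ℝ))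

instance : One Oct := ⟨((1 : Quaternion ℝ), (0 : Quaternion ℝ))⟩

/-- Cayley–Dickson multiplication on `ℍ × ℍ`:
`(a, b) * (c, d) = (a c − d̄ b, d a + b c̄)`. -/
instance : Mul Oct :=
  ⟨fun x y => (x.1 * y.1 - star y.2 * x.2, y.2 * x.1 + x.2 * star y.1)⟩

theorem mul_def (x y : Oct) :
    x * y = (x.1 * y.1 - star y.2 * x.2, y.2 * x.1 + x.2 * star y.1) := rfl

@[simp] theorem fst_zero : (0 : Oct).1 = 0 := rfl
@[simp] theorem snd_zero : (0 : Oct).2 = 0 := rfl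
@[simp] theorem fst_one : (1 : Oct).1 = 1 := rfl
@[simp] theorem snd_one : (1 : Oct).2 = 0 := rfl
@[simp] theorem fst_add (x y : Oct) : (x + y).1 = x.1 + y.1 := rfl
@[simp] theorem snd_add (x y : Oct) : (x + y).2 = x.2 + y.2 := rfl

instance : NonAssocRing Oct :=
  { (inferInstance : AddCommGroup Oct), (inferInstance : One Oct), (inferInstance : Mul Oct) with
    left_distrib := by
      intro x y z
      refine Prod.ext ?_ ?_ <;>
        (first | erw [fst_add] | erw [snd_add]) <;> simp only [mul_def, fst_add, snd_add, star_add] <;> noncomm_ring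
    right_distrib := by
      intro x y z
      refine Prod.ext ?_ ?_ <;>
        (first | erw [fst_add] | erw [snd_add]) <;> simp only [mul_def, fst_add, snd_add, star_add] <;> noncomm_ring
    zero_mul := by
      intro x
      refine Prod.ext ?_ ?_ <;> simp [mul_def]
    mul_zero := by
      intro x
      refine Prod.ext ?_ ?_ <;> simp [mul_def]
    one_mul := by
      intro x
      refine Prod.ext ?_ ?_ <;> simp [mul_def]
    mul_one := by
      intro x
      refine Prod.ext ?_ ?_ <;> simp [mul_def] }

/-- Octonionic conjugation `a ↦ ā`. -/
def conj (x : Oct) : Oct := (star x.1, -x.2)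

/-- The canonical embedding of `ℝ` into `𝕆`. -/
def oR (r : ℝ) : Oct := r • (1 : Oct)

/-- Real part `Re(a) = (a + ā)/2`, as an octonion. -/
def re (x : Oct) : Oct := (2 : ℝ)⁻¹ • (x + conj x)

/-- Imaginary part `Im(a) = (a − ā)/2`, as an octonion. -/
def im (x : Oct) : Oct := (2 : ℝ)⁻¹ • (x - conj x)

/-- The coefficient of `1` in an octonion (real-part coefficient). -/
def reCoeff (x : Oct) : ℝ := x.1.re

/-- Inner product `a·b = (a b̄ + b ā)/2`, a real octonion. -/
def dot (a b : Oct) : Oct := (2 : ℝ)⁻¹ • (a * conj b + b * conj a)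

/-- Norm `|a| = √(a ā)`. -/
def onorm (a : Oct) : ℝ := Real.sqrt (reCoeff (a * conj a))

/-- Octonionic associator `[a,b,c] = (ab)c − a(bc)`. -/
def assoc (a b c : Oct) : Oct := a * b * c - a * (b * c)

/-- The general 2×2 octonionic Hermitian matrix `[[p, a], [ā, m]]`. -/
def herm2 (p m : ℝ) (a : Oct) : Matrix (Fin 2) (Fin 2) Oct := !![oR p, a; conj a, oR m]

/-- `J(r̂) = [[0, −r̂], [r̂, 0]]`. -/
def J (r : Oct) : Matrix (Fin 2) (Fin 2) Oct := !![0, -r; r, 0]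

/-- The set `𝔸` of matrices `p I + q J(r̂)` with `p, q ∈ ℝ`, `q ≠ 0`,
and `r̂` a pure imaginary unit octonion (equivalently `r̂ ² = −1`). -/
def memA (A : Matrix (Fin 2) (Fin 2) Oct) : Prop :=
  ∃ (p q : ℝ) (r : Oct), q ≠ 0 ∧ r * r = -1 ∧
    A = p • (1 : Matrix (Fin 2) (Fin 2) Oct) + q • J r

/-- The set `𝕍` of vectors `(x, y)ᵀ ∈ 𝕆²` with `|x|² = |y|²` and `x·y = 0`. -/
def memV (v : Fin 2 → Oct) : Prop :=
  onorm (v 0) ^ 2 = onorm (v 1) ^ 2 ∧ dot (v 0) (v 1) = 0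

/-- The general 3×3 octonionic Hermitian matrix `[[p, a, b̄], [ā, m, c], [b, c̄, n]]`. -/
def herm3 (p m n : ℝ) (a b c : Oct) : Matrix (Fin 3) (Fin 3) Oct :=
  !![oR p, a, conj b; conj a, oR m, c; b, conj c, oR n]

/-- Vector associator `[U,V,W] = (U V†) W − U (V† W)`. -/
def vAssoc {n : ℕ} (U V W : Fin n → Oct) : Fin n → Oct :=
  fun i => (∑ j, (U i * conj (V j)) * W j) - U i * (∑ j, conj (V j) * W j)

/-- Outer product `U V†`, the matrix with `(i,j)` entry `U_i V̄_j`. -/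
def outer {n : ℕ} (U V : Fin n → Oct) : Matrix (Fin n) (Fin n) Oct :=
  Matrix.of fun i j => U i * conj (V j)

/-- `Ã = A − (tr A) I`. -/
def tilde {n : ℕ} (A : Matrix (Fin n) (Fin n) Oct) : Matrix (Fin n) (Fin n) Oct :=
  A - Matrix.of fun i j => if i = j then Matrix.trace A else 0

end Oct

open Oct

lemma fst_sub' (x y : Oct) : (x - y).1 = x.1 - y.1 := rfl
lemma snd_sub' (x y : Oct) : (x - y).2 = x.2 - y.2 := rfl
lemma fst_mul' (x y : Oct) : (x * y).1 = x.1 * y.1 - star y.2 * x.2 := rfl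
lemma snd_mul' (x y : Oct) : (x * y).2 = y.2 * x.1 + x.2 * star y.1 := rfl
lemma fst_conj' (x : Oct) : (conj x).1 = star x.1 := rfl
lemma snd_conj' (x : Oct) : (conj x).2 = -x.2 := rfl

lemma key_assoc (a b c : Oct) :
    ((a * conj b) * c - a * (conj b * c)) + ((a * conj c) * b - a * (conj c * b)) = 0 := by
  refine Prod.ext ?_ ?_ <;>
  · simp only [fst_mul', snd_mul', fst_conj', snd_conj', fst_sub', snd_sub', fst_add, snd_add, fst_zero, snd_zero,
      star_neg, star_star, star_sub, star_add, star_mul]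
    ext <;>
      simp only [Quaternion.re_mul, Quaternion.imI_mul, Quaternion.imJ_mul, Quaternion.imK_mul,
        Quaternion.re_add, Quaternion.imI_add, Quaternion.imJ_add, Quaternion.imK_add,
        Quaternion.re_sub, Quaternion.imI_sub, Quaternion.imJ_sub, Quaternion.imK_sub,
        Quaternion.re_neg, Quaternion.imI_neg, Quaternion.imJ_neg, Quaternion.imK_neg,
        Quaternion.re_star, Quaternion.imI_star, Quaternion.imJ_star, Quaternion.imK_star,
        Quaternion.re_zero, Quaternion.imI_zero, Quaternion.imJ_zero, Quaternion.imK_zero] <;>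
      ring

/-- `[U, V, W] + [U, W, V] = 0`, and consequently the totally
symmetrized sum of vector associators vanishes. -/
theorem stmt_16 (n : ℕ) (U V W : Fin n → Oct) :
    vAssoc U V W + vAssoc U W V = 0 ∧
      vAssoc U V W + vAssoc U W V + vAssoc V W U + vAssoc V U W +
          vAssoc W U V + vAssoc W V U = 0 := by
  have h : ∀ X Y Z : Fin n → Oct, vAssoc X Y Z + vAssoc X Z Y = 0 := by
    intro X Y Z
    funext i
    have : vAssoc X Y Z i + vAssoc X Z Y i = ∑ j,
        (((X i * conj (Y j)) * Z j - X i * (conj (Y j) * Z j)) +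
          ((X i * conj (Z j)) * Y j - X i * (conj (Z j) * Y j))) := by
      simp only [vAssoc, Finset.mul_sum, Finset.sum_sub_distrib, Finset.sum_add_distrib]
    simp only [Pi.add_apply, Pi.zero_apply]
    rw [this]
    simp [key_assoc]
  refine ⟨h U V W, ?_⟩
  have := h U V W; have := h V W U; have := h W U V
  calc vAssoc U V W + vAssoc U W V + vAssoc V W U + vAssoc V U W +
          vAssoc W U V + vAssoc W V U
      = (vAssoc U V W + vAssoc U W V) + (vAssoc V W U + vAssoc V U W) +
          (vAssoc W U V + vAssoc W V U) := by abel
    _ = 0 := by rw [h U V W, h V W U, h W U V]; simp
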